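/- Let u be C² and ζ a C¹ tensor field. With y(s) the characteristic through (x,t) and y_Δt(x) = x − Δt·u(x,t), one has ζ(y(t−Δt), t−Δt) − ζ(y_Δt(x), t−Δt) = (Δt²/2)·((Du/Dt)·∇)ζ(x, t) + O(Δt³). -/

import Mathlib

/-!
Along the characteristic, `s ↦ u (y s, s)` has derivative `Du/Dt (y s, s)`, so the Taylor
expansion of `y` at `t` reads `y (t - Δt) = x - Δt u + (Δt²/2) Du/Dt + O(Δt³)`; each order is
obtained from the previous one by the mean value inequality. Hence the exact and the approximate
departure points are both `O(Δt)` away from `(x, t)` and `O(Δt²)` apart. Since `ζ` is `C²`, its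
derivative is Lipschitz near `(x, t)`, so the difference of the two values of `ζ` is its
linearisation at `(x, t)` up to `O(Δt) · O(Δt²)`, and the linearisation of the `Δt²` term is
`(Δt²/2) ((Du/Dt)·∇)ζ`.
-/

attribute [local instance] Matrix.normedAddCommGroup Matrix.normedSpace

open Asymptotics Filter Topology Metric Set

theorem exists_pos_forall_norm_le_of_isBigO_pow {F : Type*} [Norm F] {f : ℝ → F} {n : ℕ}
    (hf : f =O[𝓝[>] 0] fun h => h ^ n) :
    ∃ C > (0:ℝ), ∃ δ > (0:ℝ), ∀ h : ℝ, 0 < h → h < δ → ‖f h‖ ≤ C * h ^ n := by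
  obtain ⟨C, hC, hCf⟩ := hf.exists_pos
  obtain ⟨δ, hδ, hbound⟩ := mem_nhdsGT_iff_exists_Ioo_subset.1 hCf.bound
  refine ⟨C, hC, δ, hδ, fun h h₀ hhδ => ?_⟩
  simpa [abs_of_pos h₀] using hbound ⟨h₀, hhδ⟩

section

variable {E F : Type*} [NormedAddCommGroup E] [NormedSpace ℝ E]
  [NormedAddCommGroup F] [NormedSpace ℝ F]

theorem isBigO_sub_pow_succ_of_hasDerivAt {f f' : ℝ → E} {t : ℝ} {n : ℕ}
    (hf : ∀ᶠ s in 𝓝 t, HasDerivAt f (f' s) s) (hf' : f' =O[𝓝 t] fun s => (s - t) ^ n) :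
    (fun s => f s - f t) =O[𝓝 t] fun s => (s - t) ^ (n + 1) := by
  obtain ⟨c, hc₀, hc⟩ := hf'.exists_pos
  obtain ⟨ε, hε, hball⟩ := eventually_nhds_iff_ball.1 (hf.and hc.bound)
  refine IsBigO.of_bound c (eventually_nhds_iff_ball.2 ⟨ε, hε, fun s hs => ?_⟩)
  have hseg : ∀ r ∈ uIcc t s, r ∈ ball t ε ∧ ‖f' r‖ ≤ c * |s - t| ^ n := fun r hr => by
    have hrt : |r - t| ≤ |s - t| := abs_sub_left_of_mem_uIcc hr
    have hr_ball : r ∈ ball t ε := by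
      rw [mem_ball, Real.dist_eq] at hs ⊢
      exact hrt.trans_lt hs
    refine ⟨hr_ball, (hball r hr_ball).2.trans ?_⟩
    rw [norm_pow, Real.norm_eq_abs]
    gcongr
  calc ‖f s - f t‖ ≤ c * |s - t| ^ n * ‖s - t‖ :=
        (convex_uIcc t s).norm_image_sub_le_of_norm_hasDerivWithin_le
          (fun r hr => (hball r (hseg r hr).1).1.hasDerivWithinAt) (fun r hr => (hseg r hr).2)
          left_mem_uIcc right_mem_uIcc
    _ = c * ‖(s - t) ^ (n + 1)‖ := by rw [norm_pow, Real.norm_eq_abs, pow_succ]; ring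

theorem isBigO_sub_sub_fderiv_apply {α : Type*} {l : Filter α} {f : E → F} {a : E}
    (hf : ContDiffAt ℝ 2 f a) {p q : α → E} {g₁ g₂ : α → ℝ} (hg₁ : Tendsto g₁ l (𝓝 0))
    (hp : (fun i => p i - a) =O[l] g₁) (hq : (fun i => q i - a) =O[l] g₁)
    (hpq : (fun i => p i - q i) =O[l] g₂) :
    (fun i => f (p i) - f (q i) - fderiv ℝ f a (p i - q i)) =O[l] (g₁ * g₂) := by
  obtain ⟨K, U, hU, hlip⟩ := (hf.fderiv_right (m := 1) le_rfl).exists_lipschitzOnWith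
  obtain ⟨r, hr, hrU⟩ := Metric.mem_nhds_iff.1 (inter_mem hU
    (hf.eventually (by simp) |>.mono fun z hz => hz.differentiableAt (by simp)))
  have near : ∀ {w : α → E}, (fun i => w i - a) =O[l] g₁ → ∀ᶠ i in l, w i ∈ ball a r :=
    fun hw => (tendsto_sub_nhds_zero_iff.1 (hw.trans_tendsto hg₁)).eventually (ball_mem_nhds a hr)
  obtain ⟨c, hc₀, hc⟩ := (hp.norm_left.add hq.norm_left).exists_pos
  obtain ⟨c', -, hc'⟩ := hpq.exists_pos
  refine IsBigO.of_bound (K * c * c') ?_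
  filter_upwards [near hp, near hq, hc.bound, hc'.bound] with i hpi hqi hR hpqi
  set R := ‖p i - a‖ + ‖q i - a‖
  rw [Real.norm_of_nonneg (by positivity)] at hR
  have hderiv : ∀ z ∈ ball a r ∩ closedBall a R, ‖fderiv ℝ f z - fderiv ℝ f a‖ ≤ K * R := by
    intro z hz
    rw [← dist_eq_norm]
    exact (hlip.dist_le_mul z (hrU hz.1).1 a (hrU (mem_ball_self hr)).1).trans
      (by gcongr; exact hz.2)
  have hconv : Convex ℝ (ball a r ∩ closedBall a R) :=
    (convex_ball a r).inter (convex_closedBall a R)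
  calc _ ≤ K * R * ‖p i - q i‖ :=
        hconv.norm_image_sub_le_of_norm_hasFDerivWithin_le'
          (fun z hz => (hrU hz.1).2.hasFDerivAt.hasFDerivWithinAt) hderiv
          ⟨hqi, by simp [R, dist_eq_norm]⟩ ⟨hpi, by simp [R, dist_eq_norm]⟩
    _ ≤ K * (c * ‖g₁ i‖) * (c' * ‖g₂ i‖) := by gcongr
    _ = K * c * c' * ‖(g₁ * g₂) i‖ := by rw [Pi.mul_apply, norm_mul]; ring

theorem fderiv_comp_prodMk_left_apply {G : Type*} [NormedAddCommGroup G] [NormedSpace ℝ G]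
    {f : E × G → F} {x : E} {t : G} (hf : DifferentiableAt ℝ f (x, t)) (w : E) :
    fderiv ℝ (fun z => f (z, t)) x w = fderiv ℝ f (x, t) (w, 0) := by
  have : HasFDerivAt (fun z => f (z, t)) ((fderiv ℝ f (x, t)).comp (.inl ℝ E G)) x :=
    hf.hasFDerivAt.comp x (hasFDerivAt_prodMk_left x t)
  rw [this.fderiv]
  rfl

/-- The material derivative `Du/Dt = ∂ₜu + (u·∇)u`. -/
noncomputable def materialDeriv (u : E × ℝ → E) (p : E × ℝ) : E := fderiv ℝ u p (u p, 1)

theorem contDiff_materialDeriv {u : E × ℝ → E} {n : WithTop ℕ∞} (hu : ContDiff ℝ (n + 1) u) :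
    ContDiff ℝ n (materialDeriv u) :=
  (hu.fderiv_right le_rfl).clm_apply ((hu.of_le le_self_add).prodMk contDiff_const)

theorem hasDerivAt_comp_characteristic {u : E × ℝ → E} {y : ℝ → E} {s : ℝ}
    (hu : DifferentiableAt ℝ u (y s, s)) (hy : HasDerivAt y (u (y s, s)) s) :
    HasDerivAt (fun r => u (y r, r)) (materialDeriv u (y s, s)) s :=
  hu.hasFDerivAt.comp_hasDerivAt (f := fun r => (y r, r)) s (hy.prodMk (hasDerivAt_id s))

theorem characteristic_backward_taylor_isBigO {u : E × ℝ → E} (hu : ContDiff ℝ 2 u)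
    {y : ℝ → E} (hy : ∀ s, HasDerivAt y (u (y s, s)) s) (t : ℝ) :
    (fun h => y (t - h) - (y t - h • u (y t, t)) - (h ^ 2 / 2) • materialDeriv u (y t, t))
      =O[𝓝 0] fun h => h ^ 3 := by
  set v := u (y t, t)
  set A := materialDeriv u (y t, t)
  have hDu : (fun s => materialDeriv u (y s, s) - A) =O[𝓝 t] fun s => (s - t) ^ 1 := by
    simpa using (((contDiff_materialDeriv (n := 1) hu).differentiable one_ne_zero _).hasFDerivAt
      |>.comp_hasDerivAt (f := fun r => (y r, r)) t ((hy t).prodMk (hasDerivAt_id t))).isBigO_sub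
  have hu₂ : (fun s => u (y s, s) - v - (s - t) • A) =O[𝓝 t] fun s => (s - t) ^ 2 := by
    have hderiv : ∀ s, HasDerivAt (fun s => u (y s, s) - (s - t) • A)
        (materialDeriv u (y s, s) - A) s := fun s =>
      (hasDerivAt_comp_characteristic (hu.differentiable (by norm_num) _) (hy s)).sub
        (((hasDerivAt_id s).sub_const t).smul_const A |>.congr_deriv (one_smul _ _))
    refine (isBigO_sub_pow_succ_of_hasDerivAt (.of_forall hderiv) hDu).congr_left fun s => ?_
    simp only [sub_self, zero_smul, sub_zero]
    abel
  have hy₃ : (fun s => (y s - (s - t) • v - ((s - t) ^ 2 / 2) • A) - y t)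
      =O[𝓝 t] fun s => (s - t) ^ 3 := by
    have hderiv : ∀ s, HasDerivAt (fun s => y s - (s - t) • v - ((s - t) ^ 2 / 2) • A)
        (u (y s, s) - v - (s - t) • A) s := fun s => by
      convert ((hy s).sub (((hasDerivAt_id s).sub_const t).smul_const v)).sub
        ((((hasDerivAt_id s).sub_const t).pow 2).div_const 2 |>.smul_const A) using 1
      · rfl
      · simp only [id, Nat.add_one_sub_one, pow_one]
        module
    simpa using isBigO_sub_pow_succ_of_hasDerivAt (.of_forall hderiv) hu₂
  have hback : Tendsto (fun h : ℝ => t - h) (𝓝 0) (𝓝 t) := by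
    simpa using (tendsto_const_nhds (x := t)).sub (tendsto_id (x := 𝓝 (0:ℝ)))
  refine isBigO_neg_right.1 ((hy₃.comp_tendsto hback).congr (fun h => ?_) (fun h => ?_))
  · simp only [Function.comp_apply, sub_sub_cancel_left, neg_smul, even_two, Even.neg_pow]
    abel
  · simp only [Function.comp_apply]
    ring

theorem departurePoint_expansion_isBigO {u : E × ℝ → E} (hu : ContDiff ℝ 2 u)
    {y : ℝ → E} (hy : ∀ s, HasDerivAt y (u (y s, s)) s) {t : ℝ} {ζ : E × ℝ → F}
    (hζ : ContDiffAt ℝ 2 ζ (y t, t)) :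
    (fun h => ζ (y (t - h), t - h) - ζ (y t - h • u (y t, t), t - h) -
        (h ^ 2 / 2) • fderiv ℝ ζ (y t, t) (materialDeriv u (y t, t), 0))
      =O[𝓝 0] fun h => h ^ 3 := by
  set A := materialDeriv u (y t, t)
  set Φ := fderiv ℝ ζ (y t, t)
  set p : ℝ → E × ℝ := fun h => (y (t - h), t - h)
  set q : ℝ → E × ℝ := fun h => (y t - h • u (y t, t), t - h)
  set e := fun h : ℝ => y (t - h) - (y t - h • u (y t, t)) - (h ^ 2 / 2) • A
  have he : e =O[𝓝 0] fun h => h ^ 3 := characteristic_backward_taylor_isBigO hu hy t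
  have hpq : ∀ h, p h - q h = (e h, 0) + (h ^ 2 / 2) • (A, 0) := fun h => by simp [p, q, e]
  have hp : (fun h => p h - (y t, t)) =O[𝓝 0] fun h => h := by
    have hyd : Differentiable ℝ y := fun s => (hy s).differentiableAt
    have : DifferentiableAt ℝ p 0 := by fun_prop
    simpa [p] using this.hasFDerivAt.isBigO_sub
  have hq : (fun h => q h - (y t, t)) =O[𝓝 0] fun h => h := by
    have : DifferentiableAt ℝ q 0 := by fun_prop
    simpa [q] using this.hasFDerivAt.isBigO_sub
  have hpq₂ : (fun h => p h - q h) =O[𝓝 0] fun h => h ^ 2 := by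
    have hA : (fun h : ℝ => (h ^ 2 / 2) • ((A, 0) : E × ℝ)) =O[𝓝 0] fun h => h ^ 2 :=
      .of_bound (‖((A, 0) : E × ℝ)‖ / 2) (.of_forall fun h => le_of_eq <| by
        rw [norm_smul, norm_div, Real.norm_ofNat]; ring)
    simp only [hpq]
    exact (isBigO_prod_left.2 ⟨he.trans (isLittleO_pow_pow (by norm_num)).isBigO,
      isBigO_zero _ _⟩).add hA
  have hζpq : (fun h => ζ (p h) - ζ (q h) - Φ (p h - q h)) =O[𝓝 0] fun h => h ^ 3 :=
    (isBigO_sub_sub_fderiv_apply hζ tendsto_id hp hq hpq₂).congr_right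
      fun h => by simp only [Pi.mul_apply, id]; ring
  have hΦe : (fun h => Φ (e h, 0)) =O[𝓝 0] fun h => h ^ 3 :=
    (Φ.isBigO_comp _ _).trans (isBigO_prod_left.2 ⟨he, isBigO_zero _ _⟩)
  refine (hζpq.add hΦe).congr_left fun h => ?_
  rw [hpq, map_add, map_smul]
  abel

end

/-- Evaluating a smooth tensor field `ζ` at the approximate departure point
`x - Δt • u(x,t)` rather than at the exact one `y (t-Δt)` produces the error
`(Δt²/2) • ((Du/Dt)·∇)ζ (x,t) + O(Δt³)`. -/
theorem tensor_at_approximate_departure_point {d : ℕ}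
    (u : EuclideanSpace ℝ (Fin d) × ℝ → EuclideanSpace ℝ (Fin d))
    (hu : ContDiff ℝ 2 u)
    (ζ : EuclideanSpace ℝ (Fin d) × ℝ → Matrix (Fin d) (Fin d) ℝ)
    (hζ : ContDiff ℝ 2 ζ)
    (y : ℝ → EuclideanSpace ℝ (Fin d)) (x : EuclideanSpace ℝ (Fin d)) (t : ℝ)
    (hy : ∀ s, HasDerivAt y (u (y s, s)) s) (hyt : y t = x) :
    ∃ C > (0:ℝ), ∃ δ > (0:ℝ), ∀ Δt : ℝ, 0 < Δt → Δt < δ →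
      ‖ζ (y (t - Δt), t - Δt) - ζ (x - Δt • u (x, t), t - Δt) -
          (Δt ^ 2 / 2) •
            (fderiv ℝ (fun z => ζ (z, t)) x) ((fderiv ℝ u (x, t)) (u (x, t), 1))‖
        ≤ C * Δt ^ 3 := by
  subst hyt
  refine exists_pos_forall_norm_le_of_isBigO_pow
    ((departurePoint_expansion_isBigO hu hy (t := t) hζ.contDiffAt).mono nhdsWithin_le_nhds
      |>.congr_left fun h => ?_)
  -- `erw`: the `fderiv` in the goal carries unbundled module instances on `EuclideanSpace`
  erw [fderiv_comp_prodMk_left_apply (hζ.differentiable (by norm_num) _)]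
  rfl
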